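/- Let β(t) be the trajectory of the reparametrized gradient flow with initialization w_+(0) = w_−(0) = ω_0 where all entries of ω_0 are nonzero. Then for all t ≥ 0, β̇(t) = (2/n) √(β(t)^{⊙2} + ω_0^{⊙4}) ⊙ ( − Σ_{i=1}^n Σ_{l≠opt(i)} exp(−γ_i^⊤ S(g_i(β(t)))) (Σ(g_i(β(t))) γ_i)_l B_{il} ), where the square root is applied entrywise. -/

import Mathlib

open Real Filter Finset

noncomputable section

namespace AttnGF

/-- Softmax of a vector in `ℝ^L`. -/
def S {L : ℕ} (u : Fin L → ℝ) (l : Fin L) : ℝ := Real.exp (u l) / ∑ j, Real.exp (u j)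

/-- Euclidean norm of a vector. -/
def l2 {d : ℕ} (x : Fin d → ℝ) : ℝ := Real.sqrt (∑ j, x j ^ 2)

/-- ℓ1 norm of a vector. -/
def l1 {d : ℕ} (x : Fin d → ℝ) : ℝ := ∑ j, |x j|

variable {n L d de : ℕ}

/-- Token scores γ_{il} = y_i v^⊤ x_{il}. -/
def gam (X : Fin n → Fin L → Fin d → ℝ) (y : Fin n → ℝ) (v : Fin d → ℝ)
    (i : Fin n) (l : Fin L) : ℝ := y i * ∑ j, v j * X i l j

/-- g_i(β) = X_i (β ⊙ z_i) for the diagonal attention model. -/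
def gD (X : Fin n → Fin L → Fin d → ℝ) (z : Fin n → Fin d → ℝ) (i : Fin n)
    (β : Fin d → ℝ) (l : Fin L) : ℝ := ∑ j, X i l j * (β j * z i j)

/-- Empirical exponential loss for the diagonal attention model. -/
def lossD (X : Fin n → Fin L → Fin d → ℝ) (z : Fin n → Fin d → ℝ)
    (y : Fin n → ℝ) (v : Fin d → ℝ) (β : Fin d → ℝ) : ℝ :=
  (1 / (n : ℝ)) * ∑ i, Real.exp (-(∑ l, gam X y v i l * S (gD X z i β) l))

/-- Constraint vectors B_{il} = z_i ⊙ (x_{i,opt(i)} − x_{il}). -/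
def Bv (X : Fin n → Fin L → Fin d → ℝ) (z : Fin n → Fin d → ℝ)
    (opt : Fin n → Fin L) (i : Fin n) (l : Fin L) (j : Fin d) : ℝ :=
  z i j * (X i (opt i) j - X i l j)

/-- (Σ(u) γ)_l where Σ(u) = Diag(S(u)) − S(u) S(u)^⊤. -/
def SigMul {L : ℕ} (u γv : Fin L → ℝ) (l : Fin L) : ℝ :=
  S u l * γv l - S u l * ∑ j, S u j * γv j

/-- j-th component of the gradient (partial derivative) of f at x. -/
def pD {d : ℕ} (f : (Fin d → ℝ) → ℝ) (x : Fin d → ℝ) (j : Fin d) : ℝ :=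
  fderiv ℝ f x (Pi.single j 1)

/-- Assumption A1. -/
def A1 (X : Fin n → Fin L → Fin d → ℝ) (y : Fin n → ℝ) (v : Fin d → ℝ)
    (opt : Fin n → Fin L) (nopt : Fin n → ℝ) : Prop :=
  ∀ i : Fin n, ∀ l : Fin L, l ≠ opt i →
    gam X y v i l < gam X y v i (opt i) ∧ gam X y v i l = nopt i

/-- Feasibility for the ℓ1-SVM. -/
def Feas (X : Fin n → Fin L → Fin d → ℝ) (z : Fin n → Fin d → ℝ)
    (opt : Fin n → Fin L) (βf : Fin d → ℝ) : Prop :=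
  ∀ i : Fin n, ∀ l : Fin L, l ≠ opt i → 1 ≤ ∑ j, βf j * Bv X z opt i l j

/-- Reparametrized gradient flow on (w₊, w₋). -/
def Flow (X : Fin n → Fin L → Fin d → ℝ) (z : Fin n → Fin d → ℝ)
    (y : Fin n → ℝ) (v : Fin d → ℝ) (wp wm : ℝ → Fin d → ℝ) : Prop :=
  ∀ t : ℝ, 0 ≤ t → ∀ j : Fin d,
    HasDerivAt (fun s => wp s j)
      (-(pD (fun u => lossD X z y v (fun k => (u k ^ 2 - wm t k ^ 2) / 2)) (wp t) j)) t ∧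
    HasDerivAt (fun s => wm s j)
      (-(pD (fun u => lossD X z y v (fun k => (wp t k ^ 2 - u k ^ 2) / 2)) (wm t) j)) t

/-- β(t) = (w₊(t)^{⊙2} − w₋(t)^{⊙2})/2. -/
def bCurve (wp wm : ℝ → Fin d → ℝ) (t : ℝ) (j : Fin d) : ℝ :=
  (wp t j ^ 2 - wm t j ^ 2) / 2

/-- Assumption A2 (initial loss bound). -/
def A2 (X : Fin n → Fin L → Fin d → ℝ) (z : Fin n → Fin d → ℝ)
    (y : Fin n → ℝ) (v : Fin d → ℝ) (opt : Fin n → Fin L) (nopt : Fin n → ℝ)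
    (β0 : Fin d → ℝ) : Prop :=
  ∀ jj : Fin n, lossD X z y v β0 ≤
    (Real.exp (-(nopt jj)) +
      ∑ i ∈ Finset.univ.erase jj, Real.exp (-(gam X y v i (opt i)))) / (n : ℝ)

/-- Margin μ(β) = min_{i, l ≠ opt(i)} β^⊤ B_{il}. -/
def margin (X : Fin n → Fin L → Fin d → ℝ) (z : Fin n → Fin d → ℝ)
    (opt : Fin n → Fin L) (β : Fin d → ℝ) : ℝ :=
  sInf {m : ℝ | ∃ i : Fin n, ∃ l : Fin L, l ≠ opt i ∧ m = ∑ j, β j * Bv X z opt i l j}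

/-- φ_{il}(t). -/
def phi (X : Fin n → Fin L → Fin d → ℝ) (z : Fin n → Fin d → ℝ)
    (y : Fin n → ℝ) (v : Fin d → ℝ) (β : ℝ → Fin d → ℝ) (i : Fin n) (l : Fin L)
    (t : ℝ) : ℝ :=
  -(2 / (n : ℝ)) * ∫ τ in (0:ℝ)..t,
    Real.exp (-(∑ l', gam X y v i l' * S (gD X z i (β τ)) l')) *
      SigMul (gD X z i (β τ)) (gam X y v i) l

/-- Dual variables λ_{il}(t) = φ_{il}(t) / ln μ(β(t)). -/
def lam (X : Fin n → Fin L → Fin d → ℝ) (z : Fin n → Fin d → ℝ)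
    (y : Fin n → ℝ) (v : Fin d → ℝ) (opt : Fin n → Fin L) (β : ℝ → Fin d → ℝ)
    (i : Fin n) (l : Fin L) (t : ℝ) : ℝ :=
  (1 / Real.log (margin X z opt (β t))) * phi X z y v β i l t

/-- g_i(K,Q) = X_i K Q^⊤ z_i for the full attention model. -/
def gM (X : Fin n → Fin L → Fin d → ℝ) (z : Fin n → Fin d → ℝ) (i : Fin n)
    (K Q : Fin d → Fin de → ℝ) (l : Fin L) : ℝ :=
  ∑ a, ∑ b, ∑ c, X i l a * K a b * Q c b * z i c

/-- Empirical exponential loss for the full attention model. -/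
def lossM (X : Fin n → Fin L → Fin d → ℝ) (z : Fin n → Fin d → ℝ)
    (y : Fin n → ℝ) (v : Fin d → ℝ) (K Q : Fin d → Fin de → ℝ) : ℝ :=
  (1 / (n : ℝ)) * ∑ i, Real.exp (-(∑ l, gam X y v i l * S (gM X z i K Q) l))

/-- Partial derivative of f with respect to the (a,b) entry of a matrix. -/
def pDM {d de : ℕ} (f : (Fin d → Fin de → ℝ) → ℝ) (M : Fin d → Fin de → ℝ)
    (a : Fin d) (b : Fin de) : ℝ :=
  fderiv ℝ f M (Pi.single a (Pi.single b 1))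

/-- Gradient flow on the key and query matrices. -/
def MFlow (X : Fin n → Fin L → Fin d → ℝ) (z : Fin n → Fin d → ℝ)
    (y : Fin n → ℝ) (v : Fin d → ℝ) (K Q : ℝ → Fin d → Fin de → ℝ) : Prop :=
  ∀ t : ℝ, 0 ≤ t → ∀ (a : Fin d) (b : Fin de),
    HasDerivAt (fun s => K s a b) (-(pDM (fun M => lossM X z y v M (Q t)) (K t) a b)) t ∧
    HasDerivAt (fun s => Q s a b) (-(pDM (fun M => lossM X z y v (K t) M) (Q t) a b)) t

/-- A rectangular matrix is diagonal: zero off the main diagonal. -/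
def RectDiag {d de : ℕ} (M : Fin d → Fin de → ℝ) : Prop :=
  ∀ (a : Fin d) (b : Fin de), (a : ℕ) ≠ (b : ℕ) → M a b = 0

/-- Orthogonality: U^⊤ U = 1. -/
def Orth {d : ℕ} (U : Fin d → Fin d → ℝ) : Prop :=
  ∀ j j' : Fin d, ∑ a, U a j * U a j' = (if j = j' then (1:ℝ) else 0)

/-- Assumption B1, with the pairing of non-optimal tokens given by the involution σ. -/
def B1 (X : Fin n → Fin L → Fin d → ℝ) (z : Fin n → Fin d → ℝ)
    (opt : Fin n → Fin L) (σ : Fin n → Fin L → Fin L) : Prop :=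
  (∀ i j : Fin n, i ≠ j →
    (∑ a, X i (opt i) a * X j (opt j) a = 0) ∧ (∑ a, z i a * z j a = 0)) ∧
  (∀ i, |∑ a, X i (opt i) a * z i a| = l2 (X i (opt i)) * l2 (z i)) ∧
  (∀ i, ∀ l, l ≠ opt i → σ i l ≠ opt i ∧ σ i l ≠ l ∧ σ i (σ i l) = l ∧
    ∃ c : ℝ, -1 ≤ c ∧ c < 1 ∧
      (∑ a, X i (opt i) a * (X i l a - X i (σ i l) a)) = 0 ∧
      (∀ a, X i l a + X i (σ i l) a = 2 * c * X i (opt i) a))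

/-- Rotated constraint vectors B̃_{il}. -/
def Btil (X : Fin n → Fin L → Fin d → ℝ) (z : Fin n → Fin d → ℝ)
    (opt : Fin n → Fin L) (pim : Fin n → Fin d) (i : Fin n) (l : Fin L) (j : Fin d) : ℝ :=
  Real.sign (∑ a, X i (opt i) a * z i a) * (∑ a, (X i (opt i) a - X i l a) * z i a) *
    (if j = pim i then 1 else 0)

/-- Margin with respect to the rotated constraints. -/
def marginB (X : Fin n → Fin L → Fin d → ℝ) (z : Fin n → Fin d → ℝ)
    (opt : Fin n → Fin L) (pim : Fin n → Fin d) (β : Fin d → ℝ) : ℝ :=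
  sInf {m : ℝ | ∃ i : Fin n, ∃ l : Fin L, l ≠ opt i ∧ m = ∑ j, β j * Btil X z opt pim i l j}

/-- Margin for a combined attention weight matrix. -/
def marginM (X : Fin n → Fin L → Fin d → ℝ) (z : Fin n → Fin d → ℝ)
    (opt : Fin n → Fin L) (W : Fin d → Fin d → ℝ) : ℝ :=
  sInf {m : ℝ | ∃ i : Fin n, ∃ l : Fin L, l ≠ opt i ∧
    m = ∑ a, ∑ c, (X i (opt i) a - X i l a) * W a c * z i c}

/-- Nuclear norm ‖W‖_* = trace((W^⊤W)^{1/2}). -/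
def nuclear {d : ℕ} (W : Matrix (Fin d) (Fin d) ℝ) : ℝ :=
  (let hA := Matrix.posSemidef_conjTranspose_mul_self W
   hA.1.eigenvectorUnitary.1 *
     Matrix.diagonal ((RCLike.ofReal : ℝ → ℝ) ∘ (√·) ∘ hA.1.eigenvalues) *
     (star hA.1.eigenvectorUnitary : Matrix (Fin d) (Fin d) ℝ)).trace

end AttnGF

/-!
Along the flow `ẇ₊ = -w₊ ⊙ ∇L(β)` and `ẇ₋ = w₋ ⊙ ∇L(β)`, so `w₊ ⊙ w₋` is conserved and equals
`ω₀^{⊙2}`. Hence `β^{⊙2} + ω₀^{⊙4} = ((w₊^{⊙2} + w₋^{⊙2}) / 2)^{⊙2}`, while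
`β̇ = w₊ ⊙ ẇ₊ - w₋ ⊙ ẇ₋ = -(w₊^{⊙2} + w₋^{⊙2}) ⊙ ∇L(β)`. The Jacobian of the softmax is `Σ(u)`,
which is symmetric with zero row sums; this turns `∇L(β)` into
`(1/n) ∑ᵢ exp(-γᵢᵀ S(gᵢ(β))) ∑_{l ≠ opt(i)} (Σ(gᵢ(β)) γᵢ)_l B_{il}`.
-/

namespace AttnGF

variable {n L d : ℕ}

section Softmax

variable (u : Fin L → ℝ)

theorem sum_exp_pos (l : Fin L) : 0 < ∑ k, Real.exp (u k) :=
  Finset.sum_pos (fun k _ => Real.exp_pos (u k)) ⟨l, Finset.mem_univ l⟩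

theorem sum_S_eq_one (l : Fin L) : ∑ k, S u k = 1 := by
  simp only [S, ← Finset.sum_div]
  exact div_self (sum_exp_pos u l).ne'

theorem sum_SigMul_eq_zero (γ : Fin L → ℝ) (l : Fin L) : ∑ k, SigMul u γ k = 0 := by
  simp only [SigMul, Finset.sum_sub_distrib, ← Finset.sum_mul, sum_S_eq_one u l, one_mul, sub_self]

theorem sum_mul_SigMul_comm (γ h : Fin L → ℝ) :
    ∑ l, γ l * SigMul u h l = ∑ l, SigMul u γ l * h l := by
  simp only [SigMul, mul_sub, sub_mul, Finset.sum_sub_distrib]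
  congr 1
  · exact Finset.sum_congr rfl fun l _ => by ring
  · calc ∑ l, γ l * (S u l * ∑ k, S u k * h k)
        = (∑ l, S u l * γ l) * ∑ k, S u k * h k := by
          rw [Finset.sum_mul]; exact Finset.sum_congr rfl fun l _ => by ring
      _ = ∑ l, S u l * (∑ k, S u k * γ k) * h l := by
          rw [mul_comm, Finset.sum_mul]; exact Finset.sum_congr rfl fun l _ => by ring

theorem sum_erase_SigMul_mul_sub (γ h : Fin L → ℝ) (l₀ : Fin L) :
    ∑ l ∈ Finset.univ.erase l₀, SigMul u γ l * (h l₀ - h l) = -∑ l, SigMul u γ l * h l := by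
  rw [Finset.sum_erase _ (by rw [sub_self, mul_zero])]
  simp only [mul_sub, Finset.sum_sub_distrib, ← Finset.sum_mul, sum_SigMul_eq_zero u γ l₀, zero_mul,
    zero_sub]

/-- Via `S u l = exp (u l - log ∑ₖ exp (u k))`, which avoids a quotient rule in several
variables. -/
theorem hasFDerivAt_S (l : Fin L) :
    HasFDerivAt (fun u => S u l)
      (S u l • (ContinuousLinearMap.proj (R := ℝ) (φ := fun _ : Fin L => ℝ) l
        - ∑ k, S u k • ContinuousLinearMap.proj k)) u := by
  have hS (w : Fin L → ℝ) : S w l = Real.exp (w l - Real.log (∑ k, Real.exp (w k))) := by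
    rw [Real.exp_sub, Real.exp_log (sum_exp_pos w l), S]
  have hπ (k : Fin L) : HasFDerivAt (fun w : Fin L → ℝ => w k)
      (ContinuousLinearMap.proj (R := ℝ) k) u := hasFDerivAt_apply k u
  have hZ := HasFDerivAt.fun_sum fun k (_ : k ∈ Finset.univ) => (hπ k).exp
  have h := ((hπ l).fun_sub (hZ.log (sum_exp_pos u l).ne')).exp
  rw [← hS u] at h
  rw [funext hS]
  refine h.congr_fderiv ?_
  simp only [Finset.smul_sum, smul_smul, S, div_eq_inv_mul]

end Softmax

@[fun_prop]
theorem differentiable_S (l : Fin L) : Differentiable ℝ fun u : Fin L → ℝ => S u l :=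
  fun u => (hasFDerivAt_S u l).differentiableAt

theorem differentiable_lossD (X : Fin n → Fin L → Fin d → ℝ) (z : Fin n → Fin d → ℝ)
    (y : Fin n → ℝ) (v : Fin d → ℝ) : Differentiable ℝ (lossD X z y v) := by
  unfold lossD gD
  fun_prop

theorem hasFDerivAt_gD (X : Fin n → Fin L → Fin d → ℝ) (z : Fin n → Fin d → ℝ) (i : Fin n)
    (β : Fin d → ℝ) :
    HasFDerivAt (gD X z i)
      (ContinuousLinearMap.pi fun l =>
        ∑ k, X i l k • z i k • ContinuousLinearMap.proj (R := ℝ) (φ := fun _ : Fin d => ℝ) k)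
      β := by
  refine hasFDerivAt_pi.2 fun l => HasFDerivAt.fun_sum fun k _ => ?_
  exact ((hasFDerivAt_apply (𝕜 := ℝ) k β).mul_const (z i k)).const_mul (X i l k)

theorem pD_lossD (X : Fin n → Fin L → Fin d → ℝ) (z : Fin n → Fin d → ℝ)
    (y : Fin n → ℝ) (v : Fin d → ℝ) (opt : Fin n → Fin L) (β : Fin d → ℝ) (j : Fin d) :
    pD (lossD X z y v) β j = (1 / (n : ℝ)) * ∑ i, ∑ l ∈ Finset.univ.erase (opt i),
      Real.exp (-(∑ l', gam X y v i l' * S (gD X z i β) l')) *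
        SigMul (gD X z i β) (gam X y v i) l * Bv X z opt i l j := by
  have hsample (i : Fin n) :
      ∑ l ∈ Finset.univ.erase (opt i), SigMul (gD X z i β) (gam X y v i) l * Bv X z opt i l j =
        -∑ l, gam X y v i l * SigMul (gD X z i β) (fun l => X i l j * z i j) l := by
    rw [sum_mul_SigMul_comm, ← sum_erase_SigMul_mul_sub _ _ _ (opt i)]
    exact Finset.sum_congr rfl fun l _ => by rw [Bv]; ring
  have hF (i : Fin n) := (HasFDerivAt.fun_sum fun l (_ : l ∈ Finset.univ) =>
    ((hasFDerivAt_S _ l).comp β (hasFDerivAt_gD X z i β)).const_mul (gam X y v i l)).fun_neg.exp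
  have hL := (HasFDerivAt.fun_sum fun i (_ : i ∈ Finset.univ) => hF i).const_mul (1 / (n : ℝ))
  rw [pD, HasFDerivAt.fderiv (f := lossD X z y v) hL]
  simp only [mul_assoc, ← Finset.mul_sum, hsample]
  simp [SigMul, Pi.single_apply, mul_sub]

theorem pD_comp_coordwise {f : (Fin d → ℝ) → ℝ} {ψ : Fin d → ℝ → ℝ} {ψ' : Fin d → ℝ}
    {w : Fin d → ℝ} (hψ : ∀ k, HasDerivAt (ψ k) (ψ' k) (w k))
    (hf : DifferentiableAt ℝ f fun k => ψ k (w k)) (j : Fin d) :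
    pD (fun u => f fun k => ψ k (u k)) w j = ψ' j * pD f (fun k => ψ k (w k)) j := by
  have hΨ : HasFDerivAt (fun (u : Fin d → ℝ) k => ψ k (u k))
      (ContinuousLinearMap.pi fun k => ψ' k • ContinuousLinearMap.proj k) w :=
    hasFDerivAt_pi.2 fun k =>
      ((hψ k).hasFDerivAt.comp w (hasFDerivAt_apply k w)).congr_fderiv (by ext; simp [mul_comm])
  have hsingle : (ContinuousLinearMap.pi fun k =>
      ψ' k • ContinuousLinearMap.proj (R := ℝ) (φ := fun _ : Fin d => ℝ) k) (Pi.single j 1) =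
        ψ' j • (Pi.single j 1 : Fin d → ℝ) := by
    ext k
    by_cases h : k = j <;> simp [h]
  rw [pD, HasFDerivAt.fderiv (f := fun u => f fun k => ψ k (u k)) (hf.hasFDerivAt.comp w hΨ),
    ContinuousLinearMap.comp_apply, hsingle, map_smul, smul_eq_mul, pD]

theorem mul_eq_of_hasDerivAt_opposite_rates {a b g : ℝ → ℝ}
    (ha : ∀ t, 0 ≤ t → HasDerivAt a (-(a t * g t)) t)
    (hb : ∀ t, 0 ≤ t → HasDerivAt b (b t * g t) t) {t : ℝ} (ht : 0 ≤ t) :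
    a t * b t = a 0 * b 0 := by
  have hab (s : ℝ) (hs : 0 ≤ s) : HasDerivAt (fun r => a r * b r) 0 s := by
    have h := (ha s hs).fun_mul (hb s hs)
    rwa [show -(a s * g s) * b s + a s * (b s * g s) = 0 by ring] at h
  exact constant_of_has_deriv_right_zero (fun s hs => (hab s hs.1).continuousAt.continuousWithinAt)
    (fun s hs => (hab s hs.1).hasDerivWithinAt) t ⟨ht, le_rfl⟩

theorem sqrt_sq_half_sub_add_sq_mul (p q : ℝ) :
    √(((p ^ 2 - q ^ 2) / 2) ^ 2 + (p * q) ^ 2) = (p ^ 2 + q ^ 2) / 2 := by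
  rw [show ((p ^ 2 - q ^ 2) / 2) ^ 2 + (p * q) ^ 2 = ((p ^ 2 + q ^ 2) / 2) ^ 2 by ring]
  exact Real.sqrt_sq (by positivity)

section Flow

variable {X : Fin n → Fin L → Fin d → ℝ} {z : Fin n → Fin d → ℝ} {y : Fin n → ℝ} {v : Fin d → ℝ}
  {wp wm : ℝ → Fin d → ℝ}

theorem Flow.hasDerivAt_wp (hflow : Flow X z y v wp wm) {t : ℝ} (ht : 0 ≤ t) (j : Fin d) :
    HasDerivAt (fun s => wp s j) (-(wp t j * pD (lossD X z y v) (bCurve wp wm t) j)) t := by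
  have h := (hflow t ht j).1
  rwa [pD_comp_coordwise (ψ := fun k x => (x ^ 2 - wm t k ^ 2) / 2) (ψ' := wp t)
    (fun k => (((hasDerivAt_pow 2 (wp t k)).sub_const (wm t k ^ 2)).div_const 2).congr_deriv
      (by push_cast; ring))
    (differentiable_lossD X z y v _)] at h

theorem Flow.hasDerivAt_wm (hflow : Flow X z y v wp wm) {t : ℝ} (ht : 0 ≤ t) (j : Fin d) :
    HasDerivAt (fun s => wm s j) (wm t j * pD (lossD X z y v) (bCurve wp wm t) j) t := by
  have h := (hflow t ht j).2
  rwa [pD_comp_coordwise (ψ := fun k x => (wp t k ^ 2 - x ^ 2) / 2) (ψ' := fun k => -wm t k)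
    (fun k => (((hasDerivAt_pow 2 (wm t k)).const_sub (wp t k ^ 2)).div_const 2).congr_deriv
      (by push_cast; ring))
    (differentiable_lossD X z y v _), neg_mul, neg_neg] at h

end Flow

theorem statement7_general {n L d : ℕ}
    (X : Fin n → Fin L → Fin d → ℝ) (z : Fin n → Fin d → ℝ)
    (y : Fin n → ℝ) (v : Fin d → ℝ)
    (opt : Fin n → Fin L)
    (wp wm : ℝ → Fin d → ℝ) (hflow : Flow X z y v wp wm)
    (ω0 : Fin d → ℝ)
    (hip : wp 0 = ω0) (him : wm 0 = ω0) :
    ∀ t : ℝ, 0 ≤ t → ∀ j : Fin d,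
      HasDerivAt (fun s => bCurve wp wm s j)
        ((2 / (n : ℝ)) * Real.sqrt (bCurve wp wm t j ^ 2 + ω0 j ^ 4) *
          (-(∑ i : Fin n, ∑ l ∈ Finset.univ.erase (opt i),
            Real.exp (-(∑ l', gam X y v i l' * S (gD X z i (bCurve wp wm t)) l')) *
              SigMul (gD X z i (bCurve wp wm t)) (gam X y v i) l *
                Bv X z opt i l j))) t := by
  intro t ht j
  have hwp := hflow.hasDerivAt_wp ht j
  have hwm := hflow.hasDerivAt_wm ht j
  have hprod : wp t j * wm t j = ω0 j * ω0 j := by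
    have h := mul_eq_of_hasDerivAt_opposite_rates (fun s hs => hflow.hasDerivAt_wp hs j)
      (fun s hs => hflow.hasDerivAt_wm hs j) ht
    rwa [hip, him] at h
  have hsqrt : √(bCurve wp wm t j ^ 2 + ω0 j ^ 4) = (wp t j ^ 2 + wm t j ^ 2) / 2 := by
    rw [show ω0 j ^ 4 = (wp t j * wm t j) ^ 2 by rw [hprod]; ring]
    exact sqrt_sq_half_sub_add_sq_mul _ _
  refine (((hwp.pow 2).sub (hwm.pow 2)).div_const 2).congr_deriv ?_
  rw [hsqrt, pD_lossD X z y v opt]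
  push_cast
  ring

/-- the derivative formula for β(t) along the reparametrized flow. -/
theorem statement7 {n L d : ℕ}
    (X : Fin n → Fin L → Fin d → ℝ) (z : Fin n → Fin d → ℝ)
    (y : Fin n → ℝ) (v : Fin d → ℝ)
    (opt : Fin n → Fin L)
    (hopt : ∀ i : Fin n, ∀ l : Fin L, l ≠ opt i → gam X y v i l < gam X y v i (opt i))
    (wp wm : ℝ → Fin d → ℝ) (hflow : Flow X z y v wp wm)
    (ω0 : Fin d → ℝ) (hω : ∀ j, ω0 j ≠ 0)
    (hip : wp 0 = ω0) (him : wm 0 = ω0) :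
    ∀ t : ℝ, 0 ≤ t → ∀ j : Fin d,
      HasDerivAt (fun s => bCurve wp wm s j)
        ((2 / (n : ℝ)) * Real.sqrt (bCurve wp wm t j ^ 2 + ω0 j ^ 4) *
          (-(∑ i : Fin n, ∑ l ∈ Finset.univ.erase (opt i),
            Real.exp (-(∑ l', gam X y v i l' * S (gD X z i (bCurve wp wm t)) l')) *
              SigMul (gD X z i (bCurve wp wm t)) (gam X y v i) l *
                Bv X z opt i l j))) t :=
  statement7_general X z y v opt wp wm hflow ω0 hip him

end AttnGF
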